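/- arXiv:2305.11158 — 7 statements merged into one kernel-verified Lean document; each statement's English description precedes it below -/
import Mathlib

section
/- Let C be a rigid monoidal category and let σ be a lax braiding on C, i.e., a natural transformation σ_{X,Y} : X ⊗ Y → Y ⊗ X satisfying σ_{X,Y⊗Z} = (id_Y ⊗ σ_{X,Z}) ∘ (σ_{X,Y} ⊗ id_Z), σ_{X⊗Y,Z} = (σ_{X,Z} ⊗ id_Y) ∘ (id_X ⊗ σ_{Y,Z}), and σ_{X,𝟙} = id_X = σ_{𝟙,X} for all objects X, Y, Z. Then every component σ_{X,Y} is an isomorphism, so σ is a braiding. -/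
open CategoryTheory Category MonoidalCategory

universe v u

/-!
If `X` has a right dual `X'`, the mate of `σ X' Y` is a two-sided inverse of `σ X Y`. In each
composite, the hexagon identity for `σ (X' ⊗ X) Y`, resp. `σ (X ⊗ X') Y`, followed by naturality of
`σ` in its first variable at `ε`, resp. `η`, and `σ (𝟙_ C) Y = id`, leaves a whiskered zigzag
identity of the pairing.
-/

namespace CategoryTheory.MonoidalCategory

variable {C : Type u} [Category.{v} C] [MonoidalCategory C] (σ : ∀ X Y : C, X ⊗ Y ⟶ Y ⊗ X)

theorem laxBraiding_comp_whiskerLeft_toUnit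
    (natural_left : ∀ {X X' : C} (f : X ⟶ X') (Y : C), f ▷ Y ≫ σ X' Y = σ X Y ≫ Y ◁ f)
    (unit_left : ∀ X : C, σ (𝟙_ C) X = (λ_ X).hom ≫ (ρ_ X).inv)
    {A : C} (f : A ⟶ 𝟙_ C) (Y : C) :
    σ A Y ≫ Y ◁ f ≫ (ρ_ Y).hom = f ▷ Y ≫ (λ_ Y).hom := by
  rw [← assoc, ← natural_left, assoc, unit_left]
  simp

theorem whiskerRight_fromUnit_comp_laxBraiding
    (natural_left : ∀ {X X' : C} (f : X ⟶ X') (Y : C), f ▷ Y ≫ σ X' Y = σ X Y ≫ Y ◁ f)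
    (unit_left : ∀ X : C, σ (𝟙_ C) X = (λ_ X).hom ≫ (ρ_ X).inv)
    {A : C} (f : 𝟙_ C ⟶ A) (Y : C) :
    f ▷ Y ≫ σ A Y = (λ_ Y).hom ≫ (ρ_ Y).inv ≫ Y ◁ f := by
  rw [natural_left, unit_left, assoc]

def laxBraidingInv (X X' : C) [ExactPairing X X'] (Y : C) : Y ⊗ X ⟶ X ⊗ Y :=
  (λ_ (Y ⊗ X)).inv ≫ η_ X X' ▷ (Y ⊗ X) ≫ (α_ X X' (Y ⊗ X)).hom ≫
    X ◁ ((α_ X' Y X).inv ≫ σ X' Y ▷ X ≫ (α_ Y X' X).hom ≫ Y ◁ ε_ X X' ≫ (ρ_ Y).hom)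

theorem laxBraiding_comp_laxBraidingInv
    (natural_left : ∀ {X X' : C} (f : X ⟶ X') (Y : C), f ▷ Y ≫ σ X' Y = σ X Y ≫ Y ◁ f)
    (hex_left : ∀ X Y Z : C, σ (X ⊗ Y) Z =
      (α_ X Y Z).hom ≫ (X ◁ σ Y Z) ≫ (α_ X Z Y).inv ≫ (σ X Z ▷ Y) ≫ (α_ Z X Y).hom)
    (unit_left : ∀ X : C, σ (𝟙_ C) X = (λ_ X).hom ≫ (ρ_ X).inv)
    (X X' : C) [ExactPairing X X'] (Y : C) :
    σ X Y ≫ laxBraidingInv σ X X' Y = 𝟙 (X ⊗ Y) :=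
  calc σ X Y ≫ laxBraidingInv σ X X' Y
      = (λ_ (X ⊗ Y)).inv ≫ η_ X X' ▷ (X ⊗ Y) ≫ (X ⊗ X') ◁ σ X Y ≫ (α_ X X' (Y ⊗ X)).hom ≫
          X ◁ ((α_ X' Y X).inv ≫ σ X' Y ▷ X ≫ (α_ Y X' X).hom ≫
            Y ◁ ε_ X X' ≫ (ρ_ Y).hom) := by
        rw [laxBraidingInv, ← whisker_exchange_assoc]; monoidal
    _ = (λ_ (X ⊗ Y)).inv ≫ η_ X X' ▷ (X ⊗ Y) ≫ (α_ X X' (X ⊗ Y)).hom ≫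
          X ◁ ((α_ X' X Y).inv ≫ σ (X' ⊗ X) Y ≫ Y ◁ ε_ X X' ≫ (ρ_ Y).hom) := by
        rw [hex_left]; monoidal
    _ = (λ_ (X ⊗ Y)).inv ≫ η_ X X' ▷ (X ⊗ Y) ≫ (α_ X X' (X ⊗ Y)).hom ≫
          X ◁ ((α_ X' X Y).inv ≫ ε_ X X' ▷ Y ≫ (λ_ Y).hom) := by
        rw [laxBraiding_comp_whiskerLeft_toUnit σ natural_left unit_left]
    _ = ((λ_ X).inv ≫ (η_ X X' ▷ X ≫ (α_ X X' X).hom ≫ X ◁ ε_ X X') ≫ (ρ_ X).hom) ▷ Y := by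
        monoidal
    _ = 𝟙 (X ⊗ Y) := by simp

theorem laxBraidingInv_comp_laxBraiding
    (natural_left : ∀ {X X' : C} (f : X ⟶ X') (Y : C), f ▷ Y ≫ σ X' Y = σ X Y ≫ Y ◁ f)
    (hex_left : ∀ X Y Z : C, σ (X ⊗ Y) Z =
      (α_ X Y Z).hom ≫ (X ◁ σ Y Z) ≫ (α_ X Z Y).inv ≫ (σ X Z ▷ Y) ≫ (α_ Z X Y).hom)
    (unit_left : ∀ X : C, σ (𝟙_ C) X = (λ_ X).hom ≫ (ρ_ X).inv)
    (X X' : C) [ExactPairing X X'] (Y : C) :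
    laxBraidingInv σ X X' Y ≫ σ X Y = 𝟙 (Y ⊗ X) :=
  calc laxBraidingInv σ X X' Y ≫ σ X Y
      = (λ_ (Y ⊗ X)).inv ≫ η_ X X' ▷ (Y ⊗ X) ≫ (α_ X X' (Y ⊗ X)).hom ≫
          X ◁ (α_ X' Y X).inv ≫ X ◁ (σ X' Y ▷ X) ≫
          (α_ X (Y ⊗ X') X).inv ≫ (α_ X Y X').inv ▷ X ≫ (α_ (X ⊗ Y) X' X).hom ≫
          σ X Y ▷ (X' ⊗ X) ≫ (Y ⊗ X) ◁ ε_ X X' ≫ (ρ_ (Y ⊗ X)).hom := by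
        rw [laxBraidingInv, ← whisker_exchange_assoc]; monoidal
    _ = (λ_ (Y ⊗ X)).inv ≫ η_ X X' ▷ (Y ⊗ X) ≫ (α_ (X ⊗ X') Y X).inv ≫
          σ (X ⊗ X') Y ▷ X ≫ (α_ Y (X ⊗ X') X).hom ≫
          Y ◁ ((α_ X X' X).hom ≫ X ◁ ε_ X X' ≫ (ρ_ X).hom) := by
        rw [hex_left]; monoidal
    _ = (λ_ Y).inv ▷ X ≫ (η_ X X' ▷ Y ≫ σ (X ⊗ X') Y) ▷ X ≫ (α_ Y (X ⊗ X') X).hom ≫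
          Y ◁ ((α_ X X' X).hom ≫ X ◁ ε_ X X' ≫ (ρ_ X).hom) := by
        monoidal
    _ = Y ◁ ((λ_ X).inv ≫ (η_ X X' ▷ X ≫ (α_ X X' X).hom ≫ X ◁ ε_ X X') ≫ (ρ_ X).hom) := by
        rw [whiskerRight_fromUnit_comp_laxBraiding σ natural_left unit_left]; monoidal
    _ = 𝟙 (Y ⊗ X) := by simp


theorem isIso_laxBraiding_of_exactPairing
    (natural_left : ∀ {X X' : C} (f : X ⟶ X') (Y : C), f ▷ Y ≫ σ X' Y = σ X Y ≫ Y ◁ f)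
    (hex_left : ∀ X Y Z : C, σ (X ⊗ Y) Z =
      (α_ X Y Z).hom ≫ (X ◁ σ Y Z) ≫ (α_ X Z Y).inv ≫ (σ X Z ▷ Y) ≫ (α_ Z X Y).hom)
    (unit_left : ∀ X : C, σ (𝟙_ C) X = (λ_ X).hom ≫ (ρ_ X).inv)
    (X X' : C) [ExactPairing X X'] (Y : C) : IsIso (σ X Y) :=
  ⟨laxBraidingInv σ X X' Y,
    laxBraiding_comp_laxBraidingInv σ natural_left hex_left unit_left X X' Y,
    laxBraidingInv_comp_laxBraiding σ natural_left hex_left unit_left X X' Y⟩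

end CategoryTheory.MonoidalCategory

theorem laxBraiding_isIso_of_rigid_general
    {C : Type u} [Category.{v} C] [MonoidalCategory C] [RigidCategory C]
    (σ : ∀ X Y : C, X ⊗ Y ⟶ Y ⊗ X)
    (natural : ∀ {X X' Y Y' : C} (f : X ⟶ X') (g : Y ⟶ Y'),
      (f ⊗ₘ g) ≫ σ X' Y' = σ X Y ≫ (g ⊗ₘ f))
    (hex_left : ∀ X Y Z : C, σ (X ⊗ Y) Z =
      (α_ X Y Z).hom ≫ (X ◁ σ Y Z) ≫ (α_ X Z Y).inv ≫ (σ X Z ▷ Y) ≫ (α_ Z X Y).hom)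
    (unit_left : ∀ X : C, σ (𝟙_ C) X = (λ_ X).hom ≫ (ρ_ X).inv) :
    ∀ X Y : C, IsIso (σ X Y) := by
  have natural_left {X X' : C} (f : X ⟶ X') (Y : C) : f ▷ Y ≫ σ X' Y = σ X Y ≫ Y ◁ f := by
    simpa using natural f (𝟙 Y)
  intro X Y
  exact isIso_laxBraiding_of_exactPairing σ natural_left hex_left unit_left X Xᘁ Y

/-- In a rigid monoidal category, every lax braiding is invertible (hence is a braiding):
given a natural family `σ_{X,Y} : X ⊗ Y ⟶ Y ⊗ X` satisfying the two hexagon identities and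
the unit constraints, every component `σ X Y` is an isomorphism. -/
theorem laxBraiding_isIso_of_rigid
    {C : Type u} [Category.{v} C] [MonoidalCategory C] [RigidCategory C]
    (σ : ∀ X Y : C, X ⊗ Y ⟶ Y ⊗ X)
    (natural : ∀ {X X' Y Y' : C} (f : X ⟶ X') (g : Y ⟶ Y'),
      (f ⊗ₘ g) ≫ σ X' Y' = σ X Y ≫ (g ⊗ₘ f))
    (hex_right : ∀ X Y Z : C, σ X (Y ⊗ Z) =
      (α_ X Y Z).inv ≫ (σ X Y ▷ Z) ≫ (α_ Y X Z).hom ≫ (Y ◁ σ X Z) ≫ (α_ Y Z X).inv)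
    (hex_left : ∀ X Y Z : C, σ (X ⊗ Y) Z =
      (α_ X Y Z).hom ≫ (X ◁ σ Y Z) ≫ (α_ X Z Y).inv ≫ (σ X Z ▷ Y) ≫ (α_ Z X Y).hom)
    (unit_right : ∀ X : C, σ X (𝟙_ C) = (ρ_ X).hom ≫ (λ_ X).inv)
    (unit_left : ∀ X : C, σ (𝟙_ C) X = (λ_ X).hom ≫ (ρ_ X).inv) :
    ∀ X Y : C, IsIso (σ X Y) :=
  laxBraiding_isIso_of_rigid_general σ natural hex_left unit_left
end

section
/- Let V be a braided rigid monoidal category with braiding σ. For each object M define the Drinfeld morphism ν_M : M → M∨∨ as the composite (id_{M∨∨} ⊗ ev^r_M) ∘ (id_{M∨∨} ⊗ σ_{M∨,M}) ∘ (coev^r_{M∨} ⊗ id_M), and define ν̄_M : M∨∨ → M as the composite (ev^r_{M∨} ⊗ id_M) ∘ (σ_{M∨,M∨∨}^{-1} ⊗ id_M) ∘ (id_{M∨∨} ⊗ coev^r_M). Then ν̄_M ∘ ν_M = id_M and ν_M ∘ ν̄_M = id_{M∨∨}; that is, each ν_M is an isomorphism with inverse ν̄_M. -/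
open CategoryTheory Category MonoidalCategory

universe v u

variable {V : Type u} [Category.{v} V] [MonoidalCategory V] [BraidedCategory V] [RigidCategory V]

/-- The Drinfeld morphism `ν_M : M ⟶ M∨∨`, where `M∨ = ᘁM` denotes the chosen right dual
(in the paper's conventions) of `M`, given by
`(id ⊗ ev^r_M) ∘ (id ⊗ σ_{M∨,M}) ∘ (coev^r_{M∨} ⊗ id_M)`. -/
noncomputable def drinfeldNu (M : V) : M ⟶ (ᘁᘁM : V) :=
  (λ_ M).inv ≫ (η_ (ᘁᘁM : V) (ᘁM : V) ▷ M) ≫ (α_ (ᘁᘁM : V) (ᘁM : V) M).hom ≫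
    ((ᘁᘁM : V) ◁ (β_ (ᘁM : V) M).hom) ≫ ((ᘁᘁM : V) ◁ ε_ (ᘁM : V) M) ≫ (ρ_ (ᘁᘁM : V)).hom

/-- The morphism `ν̄_M : M∨∨ ⟶ M`, given by
`(ev^r_{M∨} ⊗ id_M) ∘ (σ_{M∨,M∨∨}⁻¹ ⊗ id_M) ∘ (id_{M∨∨} ⊗ coev^r_M)`. -/
noncomputable def drinfeldNuBar (M : V) : (ᘁᘁM : V) ⟶ M :=
  (ρ_ (ᘁᘁM : V)).inv ≫ ((ᘁᘁM : V) ◁ η_ (ᘁM : V) M) ≫ (α_ (ᘁᘁM : V) (ᘁM : V) M).inv ≫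
    ((β_ (ᘁM : V) (ᘁᘁM : V)).inv ▷ M) ≫ (ε_ (ᘁᘁM : V) (ᘁM : V) ▷ M) ≫ (λ_ M).hom

/-! `ν_M` and `ν̄_M` are the two comparison morphisms between the left duals `M` and `ᘁᘁM` of `ᘁM`,
where `M` is paired with `ᘁM` through the braiding. Comparison morphisms between two duals of the
same object are mutually inverse (`leftDualIso`). For `ν_M` this is a matter of unfolding; `ν̄_M`
caps off on the other side, so its coevaluation first has to be slid across the braiding. -/

open BraidedCategory

section Braided

variable {C : Type*} [Category C] [MonoidalCategory C] [BraidedCategory C]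

theorem exactPairing_swap_evaluation (X Y : C) [ExactPairing X Y] :
    @ExactPairing.evaluation C _ _ Y X (exactPairing_swap X Y) =
      (β_ X Y).hom ≫ ε_ X Y := rfl

theorem exactPairing_swap_coevaluation (X Y : C) [ExactPairing X Y] :
    @ExactPairing.coevaluation C _ _ Y X (exactPairing_swap X Y) =
      η_ X Y ≫ (β_ Y X).inv := rfl

theorem braiding_inv_whiskerLeft_rightUnitor (N : C) {X : C} (e : X ⟶ 𝟙_ C) :
    (β_ N X).inv ≫ N ◁ e ≫ (ρ_ N).hom = e ▷ N ≫ (λ_ N).hom := by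
  rw [← braiding_inv_naturality_left_assoc]
  simp

theorem rightUnitor_inv_whiskerLeft_eq_leftUnitor_inv_whiskerRight {A D N : C}
    (c : 𝟙_ C ⟶ D ⊗ N) (e : D ⊗ A ⟶ 𝟙_ C) :
    (ρ_ A).inv ≫ A ◁ c ≫ (α_ A D N).inv ≫ (β_ D A).inv ▷ N ≫ e ▷ N ≫ (λ_ N).hom =
      (λ_ A).inv ≫ (c ≫ (β_ N D).inv) ▷ A ≫ (α_ N D A).hom ≫ N ◁ e ≫ (ρ_ N).hom := by
  calc
    _ = (ρ_ A).inv ≫ A ◁ c ≫ (α_ A D N).inv ≫ (β_ D A).inv ▷ N ≫ (β_ N (D ⊗ A)).inv ≫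
          N ◁ e ≫ (ρ_ N).hom := by
      rw [braiding_inv_whiskerLeft_rightUnitor]
    _ = (ρ_ A).inv ≫ A ◁ c ≫ (β_ (D ⊗ N) A).inv ≫ (β_ N D).inv ▷ A ≫ (α_ N D A).hom ≫
          N ◁ e ≫ (ρ_ N).hom := by
      simp only [braiding_tensor_left_inv, braiding_tensor_right_inv, assoc]
    _ = _ := by
      rw [braiding_inv_naturality_right_assoc]
      simp

end Braided

theorem drinfeldNu_eq_leftDualIso_hom (M : V) :
    drinfeldNu M =
      (leftDualIso (exactPairing_swap (ᘁM : V) M) HasLeftDual.exact).hom := by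
  simp [drinfeldNu, leftDualIso, leftAdjointMate, exactPairing_swap_evaluation]

theorem drinfeldNuBar_eq_leftDualIso_inv (M : V) :
    drinfeldNuBar M =
      (leftDualIso (exactPairing_swap (ᘁM : V) M) HasLeftDual.exact).inv := by
  rw [drinfeldNuBar, rightUnitor_inv_whiskerLeft_eq_leftUnitor_inv_whiskerRight]
  simp [leftDualIso, leftAdjointMate, exactPairing_swap_coevaluation]

/-- The Drinfeld morphism `ν_M` is an isomorphism with inverse `ν̄_M`. -/
theorem drinfeldNu_isIso (M : V) :
    drinfeldNu M ≫ drinfeldNuBar M = 𝟙 M ∧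
      drinfeldNuBar M ≫ drinfeldNu M = 𝟙 (ᘁᘁM : V) := by
  rw [drinfeldNu_eq_leftDualIso_hom, drinfeldNuBar_eq_leftDualIso_inv]
  exact ⟨Iso.hom_inv_id _, Iso.inv_hom_id _⟩
end

section
/- Let V be a braided rigid monoidal category with braiding σ and Drinfeld morphism ν_M = (id_{M∨∨} ⊗ ev^r_M) ∘ (id_{M∨∨} ⊗ σ_{M∨,M}) ∘ (coev^r_{M∨} ⊗ id_M). Defining ν^!_X : X∨∨ → X as the left dual morphism ᵛ(ν_{X∨}) transported along the canonical identifications ᵛ(X∨) ≅ X and ᵛ(X∨∨∨) ≅ X∨∨, the Drinfeld morphism is self-conjugate: ᵛ(ν^!_{X∨}), transported along the same canonical identifications, equals ν_X for every object X (i.e., (ν^!)^! = ν). -/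
/-!
A map `f : X ⟶ ᘁᘁX` is determined by the pairing `f ▷ ᘁᘁᘁX ≫ ε`, and a mate `gᘁ` pairs from the
right exactly as `g` pairs from the left (`gᘁ ▷ _ ≫ ε = _ ◁ g ≫ ε`). The Drinfeld morphism `ν_M` is the map whose pairing
`ᘁM ◁ ν_M ≫ ε` is the braided evaluation `β ≫ ε`, hence so is `ν^!_M` on the other side. After
precomposing with the braiding, the pairing of `(ν^!)^!` is turned into that of `ν` by naturality of
the braiding, the interchange law, and these two characterizations.
-/

open CategoryTheory Category MonoidalCategory

universe v u

variable {V : Type u} [Category.{v} V] [MonoidalCategory V] [BraidedCategory V] [RigidCategory V]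

/-- The conjugate `ν^!_X : X∨∨ ⟶ X` of the Drinfeld morphism by the duality functors:
the left dual morphism `ᵛ(ν_{X∨}) : ᵛ(X∨∨∨) ⟶ ᵛ(X∨)`, where the canonical identifications
`ᵛ(X∨) = X` and `ᵛ(X∨∨∨) = X∨∨` hold definitionally for the chosen duals.  In Mathlib's
conventions the paper's left dual `ᵛf` of a morphism is the right adjoint mate `fᘁ`. -/
noncomputable def drinfeldNuBang (X : V) : (ᘁᘁX : V) ⟶ X :=
  (drinfeldNu (ᘁX : V))ᘁ

lemma eq_of_whiskerRight_comp_evaluation_eq {C : Type*} [Category C] [MonoidalCategory C]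
    {X A : C} [HasRightDual A] {f g : X ⟶ Aᘁ}
    (h : f ▷ A ≫ ε_ A Aᘁ = g ▷ A ≫ ε_ A Aᘁ) : f = g := by
  apply_fun tensorRightHomEquiv X A Aᘁ (𝟙_ C) at h
  simpa using h

lemma drinfeldNu_whiskerLeft_evaluation (M : V) :
    (ᘁM : V) ◁ drinfeldNu M ≫ ε_ (ᘁᘁM : V) (ᘁM : V) = (β_ (ᘁM : V) M).hom ≫ ε_ (ᘁM : V) M := by
  apply (tensorLeftHomEquiv M (ᘁᘁM : V) (ᘁM : V) (𝟙_ V)).injective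
  rw [tensorLeftHomEquiv_whiskerLeft_comp_evaluation]
  simp [tensorLeftHomEquiv, drinfeldNu]

lemma drinfeldNuBang_whiskerRight_evaluation (M : V) :
    drinfeldNuBang M ▷ (ᘁM : V) ≫ ε_ (ᘁM : V) M =
      (β_ (ᘁᘁM : V) (ᘁM : V)).hom ≫ ε_ (ᘁᘁM : V) (ᘁM : V) := by
  exact (rightAdjointMate_comp_evaluation (drinfeldNu (ᘁM : V))).trans
    (drinfeldNu_whiskerLeft_evaluation (ᘁM : V))

/-- The Drinfeld morphism is self-conjugate with respect to the duality functors: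
`(ν^!)^! = ν`, i.e. `ᵛ(ν^!_{X∨}) = ν_X` for every object `X` (up to the canonical
identifications, which are definitional here). -/
theorem drinfeldNu_bang_bang (X : V) :
    (drinfeldNuBang (ᘁX : V))ᘁ = drinfeldNu X := by
  apply eq_of_whiskerRight_comp_evaluation_eq (A := (ᘁᘁᘁX : V))
  rw [rightAdjointMate_comp_evaluation, ← cancel_epi (β_ (ᘁᘁᘁX : V) X).hom]
  calc (β_ (ᘁᘁᘁX : V) X).hom ≫ X ◁ drinfeldNuBang (ᘁX : V) ≫ ε_ (ᘁX : V) X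
      = drinfeldNuBang (ᘁX : V) ▷ X ≫ (β_ (ᘁX : V) X).hom ≫ ε_ (ᘁX : V) X := by
        rw [BraidedCategory.braiding_naturality_left_assoc]
    _ = drinfeldNuBang (ᘁX : V) ▷ X ≫ (ᘁX : V) ◁ drinfeldNu X ≫ ε_ (ᘁᘁX : V) (ᘁX : V) := by
        rw [drinfeldNu_whiskerLeft_evaluation]
    _ = (ᘁᘁᘁX : V) ◁ drinfeldNu X ≫ drinfeldNuBang (ᘁX : V) ▷ (ᘁᘁX : V) ≫
          ε_ (ᘁᘁX : V) (ᘁX : V) := by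
        rw [whisker_exchange_assoc]
    _ = (ᘁᘁᘁX : V) ◁ drinfeldNu X ≫ (β_ (ᘁᘁᘁX : V) (ᘁᘁX : V)).hom ≫
          ε_ (ᘁᘁᘁX : V) (ᘁᘁX : V) := by
        rw [drinfeldNuBang_whiskerRight_evaluation]
    _ = (β_ (ᘁᘁᘁX : V) X).hom ≫ drinfeldNu X ▷ (ᘁᘁᘁX : V) ≫ ε_ (ᘁᘁᘁX : V) (ᘁᘁX : V) := by
        rw [BraidedCategory.braiding_naturality_right_assoc]
end

section
/- Let V be a braided rigid monoidal category with braiding σ. Then every balanced structure θ on V is invertible: each component θ_X : X → X is an isomorphism. -/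
open CategoryTheory Category MonoidalCategory

universe v u

/-! Since `θ_𝟙 = 𝟙`, naturality of `θ` says that the coevaluation and evaluation of the duality
between `X` and `Xᘁ` are fixed by `θ`, and the balancing axiom exhibits `θ_X` as a factor of
`θ_{X ⊗ Xᘁ}` and of `θ_{Xᘁ ⊗ X}`. Pulling the strings of the duality turns these two identities
into a section and a retraction of `θ_X`. -/

section ExactPairing

variable {C : Type u} [Category.{v} C] [MonoidalCategory C]

theorem isSplitEpi_of_comp_whiskerRight_eq_coevaluation {X X' Y : C} [ExactPairing X Y]
    {g : X' ⟶ X} {a : 𝟙_ C ⟶ X' ⊗ Y} (h : a ≫ g ▷ Y = η_ X Y) : IsSplitEpi g := by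
  set s := (tensorRightHomEquiv (𝟙_ C) X Y X').symm a
  have hsection : s ≫ g = (λ_ X).hom := by
    apply (tensorRightHomEquiv (𝟙_ C) X Y X).injective
    rw [tensorRightHomEquiv_naturality, Equiv.apply_symm_apply, h]
    simp [tensorRightHomEquiv, unitors_equal]
  exact ⟨⟨(λ_ X).inv ≫ s, by rw [assoc, hsection, Iso.inv_hom_id]⟩⟩

theorem isSplitMono_of_whiskerLeft_comp_eq_evaluation {X X' Y : C} [ExactPairing X Y]
    {g : X ⟶ X'} {b : Y ⊗ X' ⟶ 𝟙_ C} (h : Y ◁ g ≫ b = ε_ X Y) : IsSplitMono g := by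
  set r := tensorLeftHomEquiv X' X Y (𝟙_ C) b
  have hretraction : g ≫ r = (ρ_ X).inv := by
    apply (tensorLeftHomEquiv X X Y (𝟙_ C)).symm.injective
    rw [tensorLeftHomEquiv_symm_naturality, Equiv.symm_apply_apply, h]
    simp [tensorLeftHomEquiv, unitors_equal]
  exact ⟨⟨r ≫ (ρ_ X).hom, by rw [← assoc, hretraction, Iso.inv_hom_id]⟩⟩

end ExactPairing

/-- In a braided rigid monoidal category, every balanced structure (twist) is invertible:
if `θ : 𝟭_V ⟶ 𝟭_V` is natural, satisfies `θ_{X⊗Y} = (θ_X ⊗ θ_Y) ∘ σ_{Y,X} ∘ σ_{X,Y}`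
and `θ_𝟙 = id_𝟙`, then every component `θ X` is an isomorphism. -/
theorem balanced_isIso_of_rigid
    {V : Type u} [Category.{v} V] [MonoidalCategory V] [BraidedCategory V] [RigidCategory V]
    (θ : ∀ X : V, X ⟶ X)
    (natural : ∀ {X Y : V} (f : X ⟶ Y), f ≫ θ Y = θ X ≫ f)
    (balanced : ∀ X Y : V, θ (X ⊗ Y) = (β_ X Y).hom ≫ (β_ Y X).hom ≫ (θ X ⊗ₘ θ Y))
    (unit : θ (𝟙_ V) = 𝟙 (𝟙_ V)) :
    ∀ X : V, IsIso (θ X) := by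
  intro X
  have hη : (η_ X Xᘁ ≫ (β_ X Xᘁ).hom ≫ (β_ Xᘁ X).hom ≫ X ◁ θ Xᘁ) ≫ θ X ▷ Xᘁ = η_ X Xᘁ := by
    simpa [balanced, unit, tensorHom_def'] using natural (η_ X Xᘁ)
  have hε : Xᘁ ◁ θ X ≫ (β_ Xᘁ X).hom ≫ (β_ X Xᘁ).hom ≫ θ Xᘁ ▷ X ≫ ε_ X Xᘁ = ε_ X Xᘁ := by
    simpa [balanced, unit, MonoidalCategory.tensorHom_def, whisker_exchange_assoc,
      BraidedCategory.braiding_naturality_right_assoc] using (natural (ε_ X Xᘁ)).symm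
  have := isSplitEpi_of_comp_whiskerRight_eq_coevaluation hη
  have := isSplitMono_of_whiskerLeft_comp_eq_evaluation hε
  exact isIso_of_mono_of_isSplitEpi _
end

section
/- Let V be a rigid monoidal category and D an object of V. Then the assignments φ ↦ φ̃, where φ̃_X := (id_X ⊗ φ_X) ∘ (coev^l_X ⊗ id_X) : X → X ⊗ D, and ψ ↦ ψ̄, where ψ̄_X := (ev^l_X ⊗ id_D) ∘ (id_{ᵛX} ⊗ ψ_X) : ᵛX ⊗ X → D, are mutually inverse bijections between (i) the set of dinatural families {φ_X : ᵛX ⊗ X → D}, i.e., families satisfying φ_X ∘ (ᵛf ⊗ id_X) = φ_Y ∘ (id_{ᵛY} ⊗ f) : ᵛY ⊗ X → D for every morphism f : X → Y, and (ii) the set of natural transformations ψ : 𝟭_V → 𝟭_V ⊗ D, i.e., families {ψ_X : X → X ⊗ D} with ψ_Y ∘ f = (f ⊗ id_D) ∘ ψ_X for every f : X → Y. -/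
/-! `φ̃_X` and `ψ̄_X` are the two directions of the duality bijection
`Hom(ᵛX ⊗ X, D) ≃ Hom(X, X ⊗ D)` (`tensorLeftHomEquiv`), so the inverse laws hold for arbitrary
families. This bijection is natural in the source and, through the mate `ᵛf`, in the dual pair as
well; for `f : X ⟶ Y` the naturality square of `φ̃` at `f` is therefore the image under the
bijection for `Y` of the dinaturality equation of `φ` at `f`. -/

open CategoryTheory Category MonoidalCategory

universe v u

variable {V : Type u} [Category.{v} V] [MonoidalCategory V] [RigidCategory V]

/-- Dinaturality for a family `φ_X : ᵛX ⊗ X ⟶ D`, where `ᵛX` denotes the chosen left dual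
(in the paper's conventions), which is the right dual `Xᘁ` in Mathlib's conventions, with
evaluation `ev^l_X = ε : Xᘁ ⊗ X ⟶ 𝟙` and coevaluation `coev^l_X = η : 𝟙 ⟶ X ⊗ Xᘁ`;
`ᵛf` is the right adjoint mate `fᘁ`. -/
def IsDinatural (D : V) (φ : ∀ X : V, (Xᘁ : V) ⊗ X ⟶ D) : Prop :=
  ∀ {X Y : V} (f : X ⟶ Y), ((fᘁ) ▷ X) ≫ φ X = ((Yᘁ : V) ◁ f) ≫ φ Y

/-- Naturality for a family `ψ_X : X ⟶ X ⊗ D`, i.e. `ψ` is a natural transformation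
`𝟭_V ⟶ 𝟭_V ⊗ D`. -/
def IsNaturalToTensor (D : V) (ψ : ∀ X : V, X ⟶ X ⊗ D) : Prop :=
  ∀ {X Y : V} (f : X ⟶ Y), f ≫ ψ Y = ψ X ≫ (f ▷ D)

/-- `φ ↦ φ̃`, where `φ̃_X = (id_X ⊗ φ_X) ∘ (coev^l_X ⊗ id_X)`. -/
noncomputable def tildeFam (D : V) (φ : ∀ X : V, (Xᘁ : V) ⊗ X ⟶ D) (X : V) : X ⟶ X ⊗ D :=
  (λ_ X).inv ≫ (η_ X (Xᘁ) ▷ X) ≫ (α_ X (Xᘁ : V) X).hom ≫ (X ◁ φ X)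

/-- `ψ ↦ ψ̄`, where `ψ̄_X = (ev^l_X ⊗ id_D) ∘ (id_{ᵛX} ⊗ ψ_X)`. -/
noncomputable def barFam (D : V) (ψ : ∀ X : V, X ⟶ X ⊗ D) (X : V) : (Xᘁ : V) ⊗ X ⟶ D :=
  ((Xᘁ : V) ◁ ψ X) ≫ (α_ (Xᘁ : V) X D).inv ≫ (ε_ X (Xᘁ) ▷ D) ≫ (λ_ D).hom

namespace CategoryTheory

variable {C : Type*} [Category C] [MonoidalCategory C]

theorem tensorLeftHomEquiv_whiskerLeft_comp {X X' Y Y' Z : C} [ExactPairing Y Y']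
    (f : X ⟶ X') (g : Y' ⊗ X' ⟶ Z) :
    tensorLeftHomEquiv X Y Y' Z (Y' ◁ f ≫ g) = f ≫ tensorLeftHomEquiv X' Y Y' Z g := by
  rw [← Equiv.eq_symm_apply, tensorLeftHomEquiv_symm_naturality, Equiv.symm_apply_apply]

theorem tensorLeftHomEquiv_comp_whiskerRight {X Y : C} [HasRightDual X] [HasRightDual Y]
    (f : X ⟶ Y) {Z W : C} (g : Xᘁ ⊗ Z ⟶ W) :
    tensorLeftHomEquiv Z X (Xᘁ) W g ≫ f ▷ W = tensorLeftHomEquiv Z Y (Yᘁ) W (fᘁ ▷ Z ≫ g) :=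
  calc tensorLeftHomEquiv Z X (Xᘁ) W g ≫ f ▷ W
      = 𝟙 _ ⊗≫ η_ X (Xᘁ) ▷ Z ⊗≫ (X ◁ g ≫ f ▷ W) ⊗≫ 𝟙 _ := by
        dsimp only [tensorLeftHomEquiv, Equiv.coe_fn_mk]; monoidal
    _ = 𝟙 _ ⊗≫ (η_ X (Xᘁ) ≫ f ▷ (Xᘁ)) ▷ Z ⊗≫ Y ◁ g ⊗≫ 𝟙 _ := by
        rw [whisker_exchange]; monoidal
    _ = 𝟙 _ ⊗≫ (η_ Y (Yᘁ) ≫ Y ◁ rightAdjointMate f) ▷ Z ⊗≫ Y ◁ g ⊗≫ 𝟙 _ := by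
        rw [coevaluation_comp_rightAdjointMate]
    _ = tensorLeftHomEquiv Z Y (Yᘁ) W (fᘁ ▷ Z ≫ g) := by
        dsimp only [tensorLeftHomEquiv, Equiv.coe_fn_mk]; monoidal

end CategoryTheory

theorem tildeFam_apply (D : V) (φ : ∀ X : V, (Xᘁ : V) ⊗ X ⟶ D) (X : V) :
    tildeFam D φ X = tensorLeftHomEquiv X X (Xᘁ) D (φ X) :=
  rfl

theorem barFam_apply (D : V) (ψ : ∀ X : V, X ⟶ X ⊗ D) (X : V) :
    barFam D ψ X = (tensorLeftHomEquiv X X (Xᘁ) D).symm (ψ X) :=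
  rfl

theorem barFam_tildeFam (D : V) (φ : ∀ X : V, (Xᘁ : V) ⊗ X ⟶ D) :
    barFam D (tildeFam D φ) = φ :=
  funext fun X => (tensorLeftHomEquiv X X (Xᘁ) D).symm_apply_apply (φ X)

theorem tildeFam_barFam (D : V) (ψ : ∀ X : V, X ⟶ X ⊗ D) :
    tildeFam D (barFam D ψ) = ψ :=
  funext fun X => (tensorLeftHomEquiv X X (Xᘁ) D).apply_symm_apply (ψ X)

theorem isNaturalToTensor_tildeFam_iff (D : V) (φ : ∀ X : V, (Xᘁ : V) ⊗ X ⟶ D) :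
    IsNaturalToTensor D (tildeFam D φ) ↔ IsDinatural D φ := by
  have key : ∀ {X Y : V} (f : X ⟶ Y), (f ≫ tildeFam D φ Y = tildeFam D φ X ≫ f ▷ D ↔
      (fᘁ) ▷ X ≫ φ X = (Yᘁ : V) ◁ f ≫ φ Y) := by
    intro X Y f
    rw [tildeFam_apply, tildeFam_apply, ← tensorLeftHomEquiv_whiskerLeft_comp,
      tensorLeftHomEquiv_comp_whiskerRight, (tensorLeftHomEquiv X Y (Yᘁ) D).apply_eq_iff_eq, eq_comm]
  exact ⟨fun h X Y f => (key f).1 (h f), fun h X Y f => (key f).2 (h f)⟩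

/-- For any object `D` of a rigid monoidal category `V`, the assignments `φ ↦ φ̃` and
`ψ ↦ ψ̄` are mutually inverse bijections between the set of dinatural families
`{φ_X : ᵛX ⊗ X ⟶ D}` and the set of natural transformations `𝟭_V ⟶ 𝟭_V ⊗ D`. -/
theorem dinatural_equiv_natural (D : V) :
    (∀ φ : ∀ X : V, (Xᘁ : V) ⊗ X ⟶ D, IsDinatural D φ → IsNaturalToTensor D (tildeFam D φ)) ∧
    (∀ ψ : ∀ X : V, X ⟶ X ⊗ D, IsNaturalToTensor D ψ → IsDinatural D (barFam D ψ)) ∧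
    (∀ φ : ∀ X : V, (Xᘁ : V) ⊗ X ⟶ D, IsDinatural D φ → barFam D (tildeFam D φ) = φ) ∧
    (∀ ψ : ∀ X : V, X ⟶ X ⊗ D, IsNaturalToTensor D ψ → tildeFam D (barFam D ψ) = ψ) := by
  refine ⟨fun φ hφ => (isNaturalToTensor_tildeFam_iff D φ).2 hφ, fun ψ hψ => ?_,
    fun φ _ => barFam_tildeFam D φ, fun ψ _ => tildeFam_barFam D ψ⟩
  rw [← tildeFam_barFam D ψ] at hψ
  exact (isNaturalToTensor_tildeFam_iff D _).1 hψ
end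

section
/- Let V be a monoidal category, H = (H, m, u) an algebra in V, V_H the category of right H-modules, U_H : V_H → V the forgetful functor, and T_H = (−) ⊗ H. Let D be any category and F, G : V → D functors. Then the assignments g ↦ g^♯, where g^♯_{(M,r)} := G(r) ∘ g_M : F(M) → G(M), and f ↦ f^♭, where f^♭_X := f_{(X⊗H, id_X⊗m)} ∘ F(id_X ⊗ u) : F(X) → G(X ⊗ H), are mutually inverse bijections between the set of natural transformations F → G ∘ T_H and the set of natural transformations F ∘ U_H → G ∘ U_H. -/
/-! This is the correspondence induced by the free-module adjunction `T_H ⊣ U_H`.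
`g^♯` is natural because module maps commute with the actions, and `f^♭` because `φ ⊗ id_H` is
a module map between free modules for every `φ : X ⟶ Y`. For `g ↦ g^♯^♭`, naturality of `g` at
the unit `id_X ⊗ u` reduces it to the triangle identity `(id_X ⊗ m) ∘ (id_X ⊗ u ⊗ id_H) = id`;
for `f ↦ f^♭^♯` one first moves `r` across `f`, using that `r : (M ⊗ H, id_M ⊗ m) → (M, r)` is a
module map, and then uses `r ∘ (id_M ⊗ u) = id`. -/

open CategoryTheory Category MonoidalCategory

universe v v₂ u u₂

variable (V : Type u) [Category.{v} V] [MonoidalCategory V]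

/-- An algebra (monoid object) `H = (H, m, u)` in a monoidal category `V`. -/
structure AlgebraObject where
  X : V
  mul : X ⊗ X ⟶ X
  one : 𝟙_ V ⟶ X
  one_mul : (one ▷ X) ≫ mul = (λ_ X).hom
  mul_one : (X ◁ one) ≫ mul = (ρ_ X).hom
  mul_assoc : (mul ▷ X) ≫ mul = (α_ X X X).hom ≫ (X ◁ mul) ≫ mul

variable {V}

/-- A right module `(M, r)` over an algebra `A` in `V`. -/
structure RightModule (A : AlgebraObject V) where
  M : V
  act : M ⊗ A.X ⟶ M
  act_act : (act ▷ A.X) ≫ act = (α_ M A.X A.X).hom ≫ (M ◁ A.mul) ≫ act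
  act_one : (M ◁ A.one) ≫ act = (ρ_ M).hom

/-- A morphism of underlying objects `u : M.M ⟶ N.M` is a morphism of right `A`-modules if it
commutes with the actions. -/
def IsModuleHom {A : AlgebraObject V} (M N : RightModule A) (u : M.M ⟶ N.M) : Prop :=
  M.act ≫ u = (u ▷ A.X) ≫ N.act

/-- The free right `A`-module `(X ⊗ H, id_X ⊗ m)` on an object `X`. -/
noncomputable def freeModule (A : AlgebraObject V) (X : V) : RightModule A where
  M := X ⊗ A.X
  act := (α_ X A.X A.X).hom ≫ (X ◁ A.mul)
  act_act := by
    rw [comp_whiskerRight, Category.assoc, associator_naturality_middle_assoc,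
      ← MonoidalCategory.whiskerLeft_comp, A.mul_assoc, associator_naturality_right_assoc,
      ← MonoidalCategory.whiskerLeft_comp]
    simp only [MonoidalCategory.whiskerLeft_comp]
    rw [pentagon_assoc]
  act_one := by
    rw [associator_naturality_right_assoc, ← MonoidalCategory.whiskerLeft_comp, A.mul_one]
    monoidal

section

variable {D : Type u₂} [Category.{v₂} D] (F G : V ⥤ D) (A : AlgebraObject V)

/-- Naturality for a family `g_X : F(X) ⟶ G(X ⊗ H)`, i.e. `g ∈ Nat(F, G ∘ T_H)` where
`T_H = (−) ⊗ H`. -/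
def IsNatToGT (g : ∀ X : V, F.obj X ⟶ G.obj (X ⊗ A.X)) : Prop :=
  ∀ {X Y : V} (u : X ⟶ Y), F.map u ≫ g Y = g X ≫ G.map (u ▷ A.X)

/-- Naturality for a family `f_M : F(M) ⟶ G(M)` indexed by right `A`-modules, i.e.
`f ∈ Nat(F ∘ U_H, G ∘ U_H)` where `U_H : V_H ⥤ V` is the forgetful functor. -/
def IsNatOnModules (f : ∀ M : RightModule A, F.obj M.M ⟶ G.obj M.M) : Prop :=
  ∀ {M N : RightModule A} (u : M.M ⟶ N.M), IsModuleHom M N u →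
    F.map u ≫ f N = f M ≫ G.map u

/-- `g ↦ g^♯`, where `g^♯_{(M,r)} := G(r) ∘ g_M`. -/
noncomputable def sharpFam (g : ∀ X : V, F.obj X ⟶ G.obj (X ⊗ A.X))
    (M : RightModule A) : F.obj M.M ⟶ G.obj M.M :=
  g M.M ≫ G.map M.act

/-- `f ↦ f^♭`, where `f^♭_X := f_{(X⊗H, id_X⊗m)} ∘ F(id_X ⊗ u)`. -/
noncomputable def flatFam (f : ∀ M : RightModule A, F.obj M.M ⟶ G.obj M.M)
    (X : V) : F.obj X ⟶ G.obj (X ⊗ A.X) :=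
  F.map ((ρ_ X).inv ≫ (X ◁ A.one)) ≫ f (freeModule A X)

noncomputable def freeUnit (X : V) : X ⟶ X ⊗ A.X :=
  (ρ_ X).inv ≫ (X ◁ A.one)

theorem flatFam_eq (f : ∀ M : RightModule A, F.obj M.M ⟶ G.obj M.M) (X : V) :
    flatFam F G A f X = F.map (freeUnit A X) ≫ f (freeModule A X) :=
  rfl

theorem freeUnit_naturality {X Y : V} (u : X ⟶ Y) :
    u ≫ freeUnit A Y = freeUnit A X ≫ (u ▷ A.X) := by
  simp [freeUnit, whisker_exchange]

theorem freeUnit_comp_act (M : RightModule A) : freeUnit A M.M ≫ M.act = 𝟙 M.M := by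
  simp [freeUnit, M.act_one]

theorem freeUnit_whiskerRight_comp_freeModule_act (X : V) :
    (freeUnit A X ▷ A.X) ≫ (freeModule A X).act = 𝟙 (X ⊗ A.X) := by
  simp only [freeUnit, freeModule, comp_whiskerRight, Category.assoc,
    associator_naturality_middle_assoc, ← MonoidalCategory.whiskerLeft_comp, A.one_mul]
  monoidal

theorem isModuleHom_whiskerRight {X Y : V} (u : X ⟶ Y) :
    IsModuleHom (freeModule A X) (freeModule A Y) (u ▷ A.X) := by
  simp only [IsModuleHom, freeModule, Category.assoc, whisker_exchange,
    associator_naturality_left_assoc]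

theorem isModuleHom_act (M : RightModule A) : IsModuleHom (freeModule A M.M) M M.act := by
  simp only [IsModuleHom, freeModule, Category.assoc, M.act_act]

theorem isNatOnModules_sharpFam {g : ∀ X : V, F.obj X ⟶ G.obj (X ⊗ A.X)}
    (hg : IsNatToGT F G A g) : IsNatOnModules F G A (sharpFam F G A g) := by
  intro M N u hu
  rw [sharpFam, sharpFam, reassoc_of% hg u, ← G.map_comp, ← hu, G.map_comp, Category.assoc]

theorem isNatToGT_flatFam {f : ∀ M : RightModule A, F.obj M.M ⟶ G.obj M.M}
    (hf : IsNatOnModules F G A f) : IsNatToGT F G A (flatFam F G A f) := by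
  intro X Y u
  have hu := hf (M := freeModule A X) (N := freeModule A Y) _ (isModuleHom_whiskerRight A u)
  rw [flatFam_eq, flatFam_eq]
  -- `(freeModule A X).M` is `X ⊗ A.X` only up to unfolding, which `rw` does not see through.
  dsimp only [freeModule] at hu ⊢
  rw [← F.map_comp_assoc, freeUnit_naturality, F.map_comp_assoc, hu, Category.assoc]

theorem flatFam_sharpFam {g : ∀ X : V, F.obj X ⟶ G.obj (X ⊗ A.X)} (hg : IsNatToGT F G A g) :
    flatFam F G A (sharpFam F G A g) = g := by
  funext X
  have hunit := freeUnit_whiskerRight_comp_freeModule_act A X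
  rw [flatFam_eq, sharpFam]
  dsimp only [freeModule] at hunit ⊢
  rw [reassoc_of% hg (freeUnit A X), ← G.map_comp, hunit, G.map_id, Category.comp_id]

theorem sharpFam_flatFam {f : ∀ M : RightModule A, F.obj M.M ⟶ G.obj M.M}
    (hf : IsNatOnModules F G A f) : sharpFam F G A (flatFam F G A f) = f := by
  funext M
  have hact := hf (M := freeModule A M.M) (N := M) _ (isModuleHom_act A M)
  rw [sharpFam, flatFam_eq]
  dsimp only [freeModule] at hact ⊢
  rw [Category.assoc, ← hact, ← F.map_comp_assoc, freeUnit_comp_act, F.map_id, Category.id_comp]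

/-- The assignments `g ↦ g^♯` and `f ↦ f^♭` are mutually inverse bijections between the set
of natural transformations `F ⟶ G ∘ T_H` and the set of natural transformations
`F ∘ U_H ⟶ G ∘ U_H`. -/
theorem sharp_flat_bijection :
    (∀ g : ∀ X : V, F.obj X ⟶ G.obj (X ⊗ A.X), IsNatToGT F G A g →
      IsNatOnModules F G A (sharpFam F G A g)) ∧
    (∀ f : ∀ M : RightModule A, F.obj M.M ⟶ G.obj M.M, IsNatOnModules F G A f →
      IsNatToGT F G A (flatFam F G A f)) ∧
    (∀ g : ∀ X : V, F.obj X ⟶ G.obj (X ⊗ A.X), IsNatToGT F G A g →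
      flatFam F G A (sharpFam F G A g) = g) ∧
    (∀ f : ∀ M : RightModule A, F.obj M.M ⟶ G.obj M.M, IsNatOnModules F G A f →
      sharpFam F G A (flatFam F G A f) = f) :=
  ⟨fun _ => isNatOnModules_sharpFam F G A, fun _ => isNatToGT_flatFam F G A,
    fun _ => flatFam_sharpFam F G A, fun _ => sharpFam_flatFam F G A⟩

end
end

section
/- Let H be a finite-dimensional Hopf algebra over a field k and let R = Σ Rᵢ ⊗ Rⁱ ∈ H ⊗ H be an R-matrix for H. Then the Drinfeld element u = Σ Rᵢ S(Rⁱ) is invertible in H, with inverse u⁻¹ = Σ S²(Rᵢ) Rⁱ. -/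
/-! Write `u = Σ Rᵢ S(Rⁱ)` and `v = Σ S²(Rᵢ) Rⁱ`. Applying `x ⊗ y ↦ x S(y)` to (R1) for `h`
gives `Σ h₂ u S(h₁) = ε(h) u`. Sums of the shape `Σ f(h₂) g(h₁)` are convolutions of maps
`H → Hᵐᵒᵖ`, and `Σ S(h₂) S²(h₁) = ε(h)`, so associativity of that convolution yields Drinfeld's
relation `h u = u S²(h)`. Hence `u v = Σ Rᵢ u Rⁱ = Σ RᵢRⱼ S(Rʲ) Rⁱ`, which is
`x ⊗ y ⊗ z ↦ x S(y) z` applied to `R₁₃R₁₂ = (id ⊗ Δ)(R)`, and therefore equals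
`Σ Rᵢ ε(Rⁱ) = 1` by (R4). In a finite-dimensional algebra a one-sided inverse is two-sided. -/

open TensorProduct

noncomputable section

variable {k : Type*} [Field k] {H : Type*} [Ring H] [HopfAlgebra k H]

/-- The antipode of `H`. -/
abbrev S : H →ₗ[k] H := HopfAlgebra.antipode (R := k)

/-- `x ⊗ y ↦ x ⊗ y ⊗ 1`. -/
def iota12 : H ⊗[k] H →ₐ[k] H ⊗[k] (H ⊗[k] H) :=
  Algebra.TensorProduct.map (AlgHom.id k H) Algebra.TensorProduct.includeLeft

/-- `x ⊗ y ↦ x ⊗ 1 ⊗ y`. -/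
def iota13 : H ⊗[k] H →ₐ[k] H ⊗[k] (H ⊗[k] H) :=
  Algebra.TensorProduct.map (AlgHom.id k H) Algebra.TensorProduct.includeRight

/-- `x ⊗ y ↦ 1 ⊗ x ⊗ y`. -/
def iota23 : H ⊗[k] H →ₐ[k] H ⊗[k] (H ⊗[k] H) :=
  Algebra.TensorProduct.includeRight

/-- `R = Σ Rᵢ ⊗ Rⁱ ∈ H ⊗ H` is an R-matrix for `H`:
(R1) `R · Δ(h) = (τ ∘ Δ)(h) · R` for all `h`;
(R2) `(id ⊗ Δ)(R) = Σ RᵢRⱼ ⊗ Rʲ ⊗ Rⁱ = R₁₃ · R₁₂`;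
(R3) `(Δ ⊗ id)(R) = Σ Rᵢ ⊗ Rⱼ ⊗ RⁱRʲ = R₁₃ · R₂₃`;
(R4) `(id ⊗ ε)(R) = (ε ⊗ id)(R) = 1`. -/
def IsRMatrix (R : H ⊗[k] H) : Prop :=
  (∀ h : H, R * Coalgebra.comul h = (TensorProduct.comm k H H) (Coalgebra.comul h) * R) ∧
  (LinearMap.lTensor H (Coalgebra.comul (R := k)) R = iota13 R * iota12 R) ∧
  ((TensorProduct.assoc k H H H)
      (LinearMap.rTensor H (Coalgebra.comul (R := k)) R) = iota13 R * iota23 R) ∧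
  ((TensorProduct.rid k H) (LinearMap.lTensor H (Coalgebra.counit (R := k)) R) = 1 ∧
    (TensorProduct.lid k H) (LinearMap.rTensor H (Coalgebra.counit (R := k)) R) = 1)

/-- The Drinfeld element `u = Σ Rᵢ S(Rⁱ)`. -/
def drinfeldElement (R : H ⊗[k] H) : H :=
  LinearMap.mul' k H (LinearMap.lTensor H (S (k := k)) R)

open HopfAlgebra WithConv MulOpposite
open scoped Coalgebra

lemma Coalgebra.sum_counit_right_smul_left {R A ι : Type*} [CommSemiring R] [AddCommMonoid A]
    [Module R A] [Coalgebra R A] {a : A} (r : Repr R a ι) :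
    ∑ i ∈ r.index, counit (R := R) (r.right i) • r.left i = a := by
  simpa only [map_sum, _root_.TensorProduct.rid_tmul, one_smul] using
    congrArg (_root_.TensorProduct.rid R A) (sum_tmul_counit_eq r)

@[simp]
lemma drinfeldElement_tmul (a b : H) : drinfeldElement (a ⊗ₜ[k] b) = a * S (k := k) b := by
  simp [drinfeldElement]

lemma drinfeldElement_add (s t : H ⊗[k] H) :
    drinfeldElement (s + t) = drinfeldElement s + drinfeldElement t := by
  simp [drinfeldElement]

lemma drinfeldElement_sum {ι : Type*} (s : Finset ι) (t : ι → H ⊗[k] H) :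
    drinfeldElement (∑ i ∈ s, t i) = ∑ i ∈ s, drinfeldElement (t i) := by
  simp [drinfeldElement]

lemma drinfeldElement_mul_comul (t : H ⊗[k] H) (x : H) :
    drinfeldElement (t * Coalgebra.comul x) =
      Coalgebra.counit (R := k) x • drinfeldElement t := by
  induction t using TensorProduct.induction_on with
  | zero => simp [drinfeldElement]
  | add t t' ht ht' => rw [add_mul, drinfeldElement_add, drinfeldElement_add, ht, ht', smul_add]
  | tmul a b =>
    let r := ℛ k x
    rw [← r.eq]
    simp only [Finset.mul_sum, Algebra.TensorProduct.tmul_mul_tmul, drinfeldElement_sum,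
      drinfeldElement_tmul, antipode_mul_antidistrib]
    calc ∑ i ∈ r.index, a * r.left i * (S (k := k) (r.right i) * S (k := k) b)
        = a * (∑ i ∈ r.index, r.left i * S (k := k) (r.right i)) * S (k := k) b := by
          simp only [Finset.mul_sum, Finset.sum_mul, mul_assoc]
      _ = Coalgebra.counit (R := k) x • (a * S (k := k) b) := by
          rw [sum_mul_antipode_eq_smul, mul_smul_comm, smul_mul_assoc, mul_one]

lemma drinfeldElement_comm_comul_mul (t : H ⊗[k] H) {x : H} {ι : Type*}
    (r : Coalgebra.Repr k x ι) :
    drinfeldElement (TensorProduct.comm k H H (Coalgebra.comul x) * t) =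
      ∑ i ∈ r.index, r.right i * drinfeldElement t * S (k := k) (r.left i) := by
  induction t using TensorProduct.induction_on with
  | zero => simp [drinfeldElement]
  | add t t' ht ht' =>
    simp only [mul_add, drinfeldElement_add, ht, ht', add_mul, Finset.sum_add_distrib]
  | tmul a b =>
    rw [← r.eq]
    simp only [Finset.sum_mul, map_sum, Algebra.TensorProduct.tmul_mul_tmul, drinfeldElement_sum,
      drinfeldElement_tmul, antipode_mul_antidistrib, TensorProduct.comm_tmul, mul_assoc]

lemma sum_right_mul_drinfeldElement_mul_antipode_left {R : H ⊗[k] H}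
    (hR : ∀ h : H, R * Coalgebra.comul h = TensorProduct.comm k H H (Coalgebra.comul h) * R)
    {x : H} {ι : Type*} (r : Coalgebra.Repr k x ι) :
    ∑ i ∈ r.index, r.right i * drinfeldElement R * S (k := k) (r.left i) =
      Coalgebra.counit (R := k) x • drinfeldElement R := by
  rw [← drinfeldElement_comm_comul_mul, ← hR, drinfeldElement_mul_comul]

def opConv (f : H →ₗ[k] H) : WithConv (H →ₗ[k] Hᵐᵒᵖ) :=
  toConv ((opLinearEquiv k).toLinearMap ∘ₗ f)

@[simp]
lemma opConv_apply (f : H →ₗ[k] H) (x : H) : opConv f x = op (f x) := rfl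

lemma opConv_mul_apply (f g : H →ₗ[k] H) {x : H} {ι : Type*} (r : Coalgebra.Repr k x ι) :
    (opConv f * opConv g) x = op (∑ i ∈ r.index, g (r.right i) * f (r.left i)) := by
  simp [r.convMul_apply]

lemma opConv_antipode_sq_mul_opConv_antipode :
    opConv (S (k := k) ∘ₗ S (k := k)) * opConv (S (k := k)) =
      (1 : WithConv (H →ₗ[k] Hᵐᵒᵖ)) := by
  ext x
  rw [opConv_mul_apply _ _ (ℛ k x)]
  simp [← antipode_mul_antidistrib, ← map_sum, sum_antipode_mul_eq_algebraMap_counit,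
    Algebra.algebraMap_eq_smul_one]

theorem mul_drinfeldElement {R : H ⊗[k] H}
    (hR : ∀ h : H, R * Coalgebra.comul h = TensorProduct.comm k H H (Coalgebra.comul h) * R)
    (h : H) : h * drinfeldElement R = drinfeldElement R * S (k := k) (S (k := k) h) := by
  set u := drinfeldElement R
  have hE (x : H) : (opConv (S (k := k)) * opConv (LinearMap.mulRight k u) :
      WithConv (H →ₗ[k] Hᵐᵒᵖ)) x = op (Coalgebra.counit (R := k) x • u) := by
    rw [opConv_mul_apply _ _ (ℛ k x), ← sum_right_mul_drinfeldElement_mul_antipode_left hR]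
    rfl
  let r := ℛ k h
  calc h * u = unop ((opConv (S (k := k) ∘ₗ S (k := k)) * opConv (S (k := k)) *
          opConv (LinearMap.mulRight k u) : WithConv (H →ₗ[k] Hᵐᵒᵖ)) h) := by
        rw [opConv_antipode_sq_mul_opConv_antipode, one_mul]; rfl
    _ = unop ((opConv (S (k := k) ∘ₗ S (k := k)) *
          (opConv (S (k := k)) * opConv (LinearMap.mulRight k u)) :
            WithConv (H →ₗ[k] Hᵐᵒᵖ)) h) := by
        rw [mul_assoc]
    _ = ∑ i ∈ r.index, (Coalgebra.counit (R := k) (r.right i) • u) *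
          S (k := k) (S (k := k) (r.left i)) := by
        simp [r.convMul_apply, hE]
    _ = u * S (k := k) (S (k := k) h) := by
        simp_rw [smul_mul_assoc, ← mul_smul_comm, ← Finset.mul_sum, ← map_smul, ← map_sum,
          Coalgebra.sum_counit_right_smul_left]

lemma drinfeldElement_mul_mul'_rTensor_antipode_sq {R : H ⊗[k] H}
    (hR : ∀ h : H, R * Coalgebra.comul h = TensorProduct.comm k H H (Coalgebra.comul h) * R)
    (t : H ⊗[k] H) :
    drinfeldElement R * LinearMap.mul' k H (LinearMap.rTensor H (S (k := k) ∘ₗ S (k := k)) t) =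
      LinearMap.mul' k H (LinearMap.rTensor H (LinearMap.mulRight k (drinfeldElement R)) t) := by
  induction t using TensorProduct.induction_on with
  | zero => simp
  | add s t hs ht => simp only [map_add, mul_add, hs, ht]
  | tmul a b => simp [← mul_assoc, ← mul_drinfeldElement hR]

def mulAntipodeMid : H ⊗[k] (H ⊗[k] H) →ₗ[k] H :=
  LinearMap.mul' k H ∘ₗ LinearMap.lTensor H (LinearMap.mul' k H ∘ₗ LinearMap.rTensor H S)

@[simp]
lemma mulAntipodeMid_tmul (x y z : H) :
    mulAntipodeMid (x ⊗ₜ[k] (y ⊗ₜ[k] z)) = x * (S (k := k) y * z) := by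
  simp [mulAntipodeMid]

lemma mulAntipodeMid_lTensor_comul (t : H ⊗[k] H) :
    mulAntipodeMid (LinearMap.lTensor H (Coalgebra.comul (R := k)) t) =
      TensorProduct.rid k H (LinearMap.lTensor H (Coalgebra.counit (R := k)) t) := by
  induction t using TensorProduct.induction_on with
  | zero => simp
  | add s t hs ht => simp only [map_add, hs, ht]
  | tmul a b => simp [mulAntipodeMid, Algebra.smul_def, Algebra.commutes]

lemma mulAntipodeMid_iota13_mul_iota12 (s t : H ⊗[k] H) :
    mulAntipodeMid (iota13 s * iota12 t) =
      LinearMap.mul' k H (LinearMap.rTensor H (LinearMap.mulRight k (drinfeldElement t)) s) := by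
  induction s using TensorProduct.induction_on with
  | zero => simp
  | add s s' hs hs' => simp only [map_add, add_mul, hs, hs']
  | tmul a b =>
    induction t using TensorProduct.induction_on with
    | zero => simp [drinfeldElement]
    | add t t' ht ht' =>
      simp only [map_add, mul_add, ht, ht', drinfeldElement_add, LinearMap.rTensor_tmul,
        LinearMap.mulRight_apply, LinearMap.mul'_apply, add_mul]
    | tmul c d => simp [iota12, iota13, mul_assoc]

theorem drinfeldElement_mul_eq_one {R : H ⊗[k] H} (hR : IsRMatrix R) :
    drinfeldElement R *
      LinearMap.mul' k H (LinearMap.rTensor H (S (k := k) ∘ₗ S (k := k)) R) = 1 := by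
  obtain ⟨hR1, hR2, -, hR4, -⟩ := hR
  rw [drinfeldElement_mul_mul'_rTensor_antipode_sq hR1, ← mulAntipodeMid_iota13_mul_iota12,
    ← hR2, mulAntipodeMid_lTensor_comul, hR4]

/-- If `R` is an R-matrix for a finite-dimensional Hopf algebra `H` over a field `k`, then the
Drinfeld element `u = Σ Rᵢ S(Rⁱ)` is invertible, with inverse `u⁻¹ = Σ S²(Rᵢ) Rⁱ`. -/
theorem drinfeldElement_invertible [FiniteDimensional k H]
    (R : H ⊗[k] H) (hR : IsRMatrix R) :
    drinfeldElement R * LinearMap.mul' k H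
        (LinearMap.rTensor H ((S (k := k)) ∘ₗ (S (k := k))) R) = 1 ∧
      LinearMap.mul' k H
        (LinearMap.rTensor H ((S (k := k)) ∘ₗ (S (k := k))) R) * drinfeldElement R = 1 := by
  have : IsArtinianRing H := .of_finite k H
  exact ⟨drinfeldElement_mul_eq_one hR, mul_eq_one_comm.mp (drinfeldElement_mul_eq_one hR)⟩

end
end
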